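/- arXiv:1509.04414 — 5 statements merged into one kernel-verified Lean document; each statement's English description precedes it below -/
import Mathlib

section
/- Let S be a spray on M with associated non-linear connection Γ = [J,S] and horizontal projector h = ½(Id + Γ). If a Lagrangian L : TM \ {0} → ℝ is a first integral of S, i.e. S(L) = 0, then the Euler-Lagrange form ω_L = i_S dd_J L + d(d_C L − L) vanishes if and only if d_h L = 0. -/
open ContinuousLinearMap in
lemma key_el {n : ℕ}
    (f : (Fin n → ℝ) → (Fin n → ℝ) → (Fin n → ℝ))
    (L : (Fin n → ℝ) × (Fin n → ℝ) → ℝ)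
    (hf : ContDiffOn ℝ (⊤ : ℕ∞) (fun p : (Fin n → ℝ) × (Fin n → ℝ) => f p.1 p.2)
      {p | p.2 ≠ 0})
    (hL : ContDiffOn ℝ (⊤ : ℕ∞) L {p | p.2 ≠ 0})
    (hSL : ∀ x (y : Fin n → ℝ), y ≠ 0 → fderiv ℝ L (x, y) (y, f x y) = 0)
    (x : Fin n → ℝ) (y : Fin n → ℝ) (hy : y ≠ 0) (i : Fin n) :
    fderiv ℝ (fun p => fderiv ℝ L p (0, Pi.single i 1)) (x, y) (y, f x y)
      = - fderiv ℝ L (x, y) (Pi.single i 1, fderiv ℝ (f x) y (Pi.single i 1)) := by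
  set p : (Fin n → ℝ) × (Fin n → ℝ) := (x, y) with hp
  have hU : IsOpen {q : (Fin n → ℝ) × (Fin n → ℝ) | q.2 ≠ 0} :=
    isOpen_ne_fun continuous_snd continuous_const
  have hmem : p ∈ {q : (Fin n → ℝ) × (Fin n → ℝ) | q.2 ≠ 0} := hy
  have hnhds := hU.mem_nhds hmem
  have hLp : ContDiffAt ℝ (⊤ : ℕ∞) L p := hL.contDiffAt hnhds
  have hfp : ContDiffAt ℝ (⊤ : ℕ∞) (fun q : (Fin n → ℝ) × (Fin n → ℝ) => f q.1 q.2) p :=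
    hf.contDiffAt hnhds
  -- differentiability facts
  have hLd : DifferentiableAt ℝ L p := hLp.differentiableAt (by simp)
  have hL1 : ContDiffAt ℝ 1 (fderiv ℝ L) p :=
    (hLp.of_le (WithTop.coe_le_coe.mpr (le_top : (2:ℕ∞) ≤ ⊤)) : ContDiffAt ℝ 2 L p).fderiv_right (by norm_num)
  have hLd2 : DifferentiableAt ℝ (fderiv ℝ L) p := hL1.differentiableAt one_ne_zero
  have hfd : DifferentiableAt ℝ (fun q : (Fin n → ℝ) × (Fin n → ℝ) => f q.1 q.2) p :=
    hfp.differentiableAt (by simp)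
  -- the "vector field along S" map w
  set w : (Fin n → ℝ) × (Fin n → ℝ) → (Fin n → ℝ) × (Fin n → ℝ) :=
    fun q => (q.2, f q.1 q.2) with hw
  have hwd : DifferentiableAt ℝ w p := differentiableAt_snd.prodMk hfd
  have hwder : HasFDerivAt w
      ((snd ℝ (Fin n → ℝ) (Fin n → ℝ)).prod
        (fderiv ℝ (fun q : (Fin n → ℝ) × (Fin n → ℝ) => f q.1 q.2) p)) p :=
    HasFDerivAt.prodMk hasFDerivAt_snd hfd.hasFDerivAt
  -- F = S(L) vanishes in a neighborhood
  have hF0 : (fun q => fderiv ℝ L q (w q)) =ᶠ[nhds p] fun _ => (0 : ℝ) := by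
    filter_upwards [hnhds] with q hq
    exact hSL q.1 q.2 hq
  have hFderiv : fderiv ℝ (fun q => fderiv ℝ L q (w q)) p = 0 := by
    rw [Filter.EventuallyEq.fderiv_eq hF0, fderiv_const_apply]
  have hclm : fderiv ℝ (fun q => fderiv ℝ L q (w q)) p =
      (fderiv ℝ L p).comp (fderiv ℝ w p) + (fderiv ℝ (fderiv ℝ L) p).flip (w p) :=
    fderiv_clm_apply hLd2 hwd
  -- second derivative applied
  have hsymm : ∀ v u, fderiv ℝ (fderiv ℝ L) p v u = fderiv ℝ (fderiv ℝ L) p u v :=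
    hLp.isSymmSndFDerivAt ((by rw [minSmoothness_of_isRCLikeNormedField]; exact WithTop.coe_le_coe.mpr (le_top : (2:ℕ∞) ≤ ⊤)))
  -- fderiv of partial map f x
  have hfx : HasFDerivAt (f x)
      ((fderiv ℝ (fun q : (Fin n → ℝ) × (Fin n → ℝ) => f q.1 q.2) p).comp
        ((0 : (Fin n → ℝ) →L[ℝ] (Fin n → ℝ)).prod (ContinuousLinearMap.id ℝ _))) y := by
    have h1 : HasFDerivAt (fun v : Fin n → ℝ => ((x, v) : (Fin n → ℝ) × (Fin n → ℝ)))
        ((0 : (Fin n → ℝ) →L[ℝ] (Fin n → ℝ)).prod (ContinuousLinearMap.id ℝ _)) y :=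
      HasFDerivAt.prodMk (hasFDerivAt_const x y) (hasFDerivAt_id y)
    exact hfd.hasFDerivAt.comp y h1
  have hfx' : fderiv ℝ (f x) y (Pi.single i 1)
      = fderiv ℝ (fun q : (Fin n → ℝ) × (Fin n → ℝ) => f q.1 q.2) p (0, Pi.single i 1) := by
    rw [hfx.fderiv]; rfl
  -- derivative of q ↦ fderiv L q (0, e i)
  have hconst : fderiv ℝ (fun q => fderiv ℝ L q ((0 : Fin n → ℝ), Pi.single i 1)) p (y, f x y)
      = fderiv ℝ (fderiv ℝ L) p (y, f x y) (0, Pi.single i 1) := by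
    rw [fderiv_clm_apply hLd2 (differentiableAt_const _)]
    simp
  rw [hconst, hsymm]
  have h0 := congrFun (congrArg (fun (A : _ →L[ℝ] ℝ) => (A : _ → ℝ)) (hFderiv ▸ hclm).symm)
      ((0 : Fin n → ℝ), Pi.single i 1)
  simp only [ContinuousLinearMap.add_apply, ContinuousLinearMap.coe_comp', Function.comp,
    ContinuousLinearMap.flip_apply, ContinuousLinearMap.zero_apply] at h0
  -- h0 : DL p (fderiv w p (0, e)) + D²L p (0,e) (w p) = 0
  have hwp : fderiv ℝ w p (0, Pi.single i 1)
      = ((Pi.single i 1 : Fin n → ℝ),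
          fderiv ℝ (fun q : (Fin n → ℝ) × (Fin n → ℝ) => f q.1 q.2) p (0, Pi.single i 1)) := by
    rw [hwder.fderiv]; rfl
  rw [hwp] at h0
  have hwpval : w p = (y, f x y) := rfl
  rw [hwpval] at h0
  rw [hfx']
  linarith

/-- Let `S` be a spray, in the coordinate model `S = yⁱ∂/∂xⁱ + fⁱ(x,y)∂/∂yⁱ` on
`ℝⁿ × (ℝⁿ \ {0})`.  For a Lagrangian `L` which is a first integral of `S`
(`S(L) = 0`), the Euler-Lagrange form `ω_L = i_S dd_J L + d(d_C L - L)`, which in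
coordinates is the semi-basic form with components
`(ω_L)ᵢ = S(∂L/∂yⁱ) - ∂L/∂xⁱ`, vanishes if and only if `d_h L = 0`, where
`h = ½(Id + [J,S])` is the horizontal projector; in coordinates `d_h L = 0` reads
`∂L/∂xⁱ + ½ (∂fʲ/∂yⁱ)(∂L/∂yʲ) = 0`. -/
theorem eulerLagrange_iff_dh_of_firstIntegral {n : ℕ}
    (f : (Fin n → ℝ) → (Fin n → ℝ) → (Fin n → ℝ))
    (L : (Fin n → ℝ) × (Fin n → ℝ) → ℝ)
    (hf : ContDiffOn ℝ (⊤ : ℕ∞) (fun p : (Fin n → ℝ) × (Fin n → ℝ) => f p.1 p.2)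
      {p | p.2 ≠ 0})
    (hf2 : ∀ x (y : Fin n → ℝ), y ≠ 0 → ∀ l : ℝ, 0 < l → f x (l • y) = (l ^ 2) • f x y)
    (hL : ContDiffOn ℝ (⊤ : ℕ∞) L {p | p.2 ≠ 0})
    -- `L` is a first integral of the spray: `S(L) = 0`
    (hSL : ∀ x (y : Fin n → ℝ), y ≠ 0 → fderiv ℝ L (x, y) (y, f x y) = 0) :
    -- `ω_L = 0`
    (∀ x (y : Fin n → ℝ), y ≠ 0 → ∀ i : Fin n,
        fderiv ℝ (fun p => fderiv ℝ L p (0, Pi.single i 1)) (x, y) (y, f x y)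
          - fderiv ℝ L (x, y) (Pi.single i 1, 0) = 0) ↔
    -- `d_h L = 0`
    (∀ x (y : Fin n → ℝ), y ≠ 0 → ∀ i : Fin n,
        fderiv ℝ L (x, y)
          (Pi.single i 1, (1/2 : ℝ) • fderiv ℝ (f x) y (Pi.single i 1)) = 0) := by
  have hhalf : ∀ x (y : Fin n → ℝ) (i : Fin n),
      fderiv ℝ L (x, y) (Pi.single i 1, (1/2 : ℝ) • fderiv ℝ (f x) y (Pi.single i 1))
        = (1/2 : ℝ) * (fderiv ℝ L (x, y) (Pi.single i 1, fderiv ℝ (f x) y (Pi.single i 1))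
            + fderiv ℝ L (x, y) (Pi.single i 1, 0)) := by
    intro x y i
    have hvec : ((Pi.single i 1 : Fin n → ℝ), (1/2 : ℝ) • fderiv ℝ (f x) y (Pi.single i 1))
        = (1/2 : ℝ) • (((Pi.single i 1 : Fin n → ℝ), fderiv ℝ (f x) y (Pi.single i 1))
            + ((Pi.single i 1 : Fin n → ℝ), (0 : Fin n → ℝ))) := by
      rw [Prod.mk_add_mk, Prod.smul_mk]
      refine Prod.ext ?_ ?_
      · show Pi.single i 1 = (1/2 : ℝ) • (Pi.single i 1 + Pi.single i 1 : Fin n → ℝ)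
        ext j; simp [Pi.smul_apply]; ring
      · simp
    rw [hvec, map_smul, map_add, smul_eq_mul]
  constructor
  · intro h x y hy i
    have k := key_el f L hf hL hSL x y hy i
    have h' := h x y hy i
    rw [k] at h'
    rw [hhalf]
    linarith
  · intro h x y hy i
    have k := key_el f L hf hL hSL x y hy i
    have h' := h x y hy i
    rw [hhalf] at h'
    rw [k]
    linarith
end

section
/- Let S be a spray, L a nowhere-zero first integral of S, and f : ℝ → ℝ a smooth function with f and f′ nowhere vanishing (on the range of L). Then L satisfies the Euler-Lagrange equation ω_L = 0 associated to S if and only if f ∘ L satisfies the Euler-Lagrange equation ω_{f∘L} = 0 associated to S. -/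
private lemma fderiv_real_apply (φ : ℝ → ℝ) (t a : ℝ) :
    fderiv ℝ φ t a = a * deriv φ t := by
  have : (fderiv ℝ φ t) a = a • (fderiv ℝ φ t) 1 := by
    rw [← map_smul, smul_eq_mul, mul_one]
  simpa [fderiv_apply_one_eq_deriv] using this


/-- Let `S` be a spray (coordinate model `S = yⁱ∂/∂xⁱ + fⁱ(x,y)∂/∂yⁱ` on
`ℝⁿ × (ℝⁿ \ {0})`), `L` a nowhere-zero first integral of `S`, and `φ : ℝ → ℝ`
smooth with `φ` and `φ'` nowhere vanishing on the range of `L`.  Then `L`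
satisfies the Euler-Lagrange equation `ω_L = 0` associated to `S` if and only if
`φ ∘ L` satisfies the Euler-Lagrange equation `ω_{φ∘L} = 0` associated to `S`.
In coordinates, `ω_L` is semi-basic with components `S(∂L/∂yⁱ) - ∂L/∂xⁱ`. -/
theorem eulerLagrange_iff_eulerLagrange_comp {n : ℕ}
    (f : (Fin n → ℝ) → (Fin n → ℝ) → (Fin n → ℝ))
    (L : (Fin n → ℝ) × (Fin n → ℝ) → ℝ) (φ : ℝ → ℝ)
    (hf : ContDiffOn ℝ (⊤ : ℕ∞) (fun p : (Fin n → ℝ) × (Fin n → ℝ) => f p.1 p.2)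
      {p | p.2 ≠ 0})
    (hf2 : ∀ x (y : Fin n → ℝ), y ≠ 0 → ∀ l : ℝ, 0 < l → f x (l • y) = (l ^ 2) • f x y)
    (hL : ContDiffOn ℝ (⊤ : ℕ∞) L {p | p.2 ≠ 0})
    (hφ : ContDiff ℝ (⊤ : ℕ∞) φ)
    -- `L` is nowhere zero
    (hL0 : ∀ x (y : Fin n → ℝ), y ≠ 0 → L (x, y) ≠ 0)
    -- `φ` and `φ'` do not vanish on the range of `L`
    (hφ0 : ∀ x (y : Fin n → ℝ), y ≠ 0 → φ (L (x, y)) ≠ 0)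
    (hφ'0 : ∀ x (y : Fin n → ℝ), y ≠ 0 → deriv φ (L (x, y)) ≠ 0)
    -- `L` is a first integral of the spray: `S(L) = 0`
    (hSL : ∀ x (y : Fin n → ℝ), y ≠ 0 → fderiv ℝ L (x, y) (y, f x y) = 0) :
    -- `ω_L = 0`
    (∀ x (y : Fin n → ℝ), y ≠ 0 → ∀ i : Fin n,
        fderiv ℝ (fun p => fderiv ℝ L p (0, Pi.single i 1)) (x, y) (y, f x y)
          - fderiv ℝ L (x, y) (Pi.single i 1, 0) = 0) ↔
    -- `ω_{φ ∘ L} = 0`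
    (∀ x (y : Fin n → ℝ), y ≠ 0 → ∀ i : Fin n,
        fderiv ℝ (fun p => fderiv ℝ (φ ∘ L) p (0, Pi.single i 1)) (x, y) (y, f x y)
          - fderiv ℝ (φ ∘ L) (x, y) (Pi.single i 1, 0) = 0) := by
  have hU : IsOpen {p : (Fin n → ℝ) × (Fin n → ℝ) | p.2 ≠ 0} :=
    isOpen_ne.preimage continuous_snd
  have hφd : Differentiable ℝ φ := hφ.differentiable (by simp)
  have hφ' : ContDiff ℝ (⊤ : ℕ∞) (deriv φ) := by
    have h1 := hφ.fderiv_right (m := (⊤ : ℕ∞)) (by simp)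
    have h2 : ContDiff ℝ (⊤ : ℕ∞) (fun t => fderiv ℝ φ t 1) :=
      h1.clm_apply contDiff_const
    have : (fun t => fderiv ℝ φ t 1) = deriv φ := by
      funext t; exact fderiv_apply_one_eq_deriv
    rwa [this] at h2
  -- chain rule on U
  have chain : ∀ q : (Fin n → ℝ) × (Fin n → ℝ), q.2 ≠ 0 →
      ∀ w, fderiv ℝ (φ ∘ L) q w = deriv φ (L q) * fderiv ℝ L q w := by
    intro q hq w
    have hLq : DifferentiableAt ℝ L q :=
      (hL.contDiffAt (hU.mem_nhds hq)).differentiableAt (by simp)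
    rw [fderiv_comp q (hφd _) hLq]
    simp only [ContinuousLinearMap.comp_apply]
    rw [fderiv_real_apply, mul_comm]
  -- same for deriv φ ∘ L (used for the second-derivative term)
  have key : ∀ x (y : Fin n → ℝ), y ≠ 0 → ∀ i : Fin n,
      fderiv ℝ (fun p => fderiv ℝ (φ ∘ L) p (0, Pi.single i 1)) (x, y) (y, f x y)
          - fderiv ℝ (φ ∘ L) (x, y) (Pi.single i 1, 0)
        = deriv φ (L (x, y)) *
          (fderiv ℝ (fun p => fderiv ℝ L p (0, Pi.single i 1)) (x, y) (y, f x y)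
            - fderiv ℝ L (x, y) (Pi.single i 1, 0)) := by
    intro x y hy i
    set p : (Fin n → ℝ) × (Fin n → ℝ) := (x, y) with hp
    have hpU : p ∈ {p : (Fin n → ℝ) × (Fin n → ℝ) | p.2 ≠ 0} := hy
    have hLp : ContDiffAt ℝ (⊤ : ℕ∞) L p := hL.contDiffAt (hU.mem_nhds hpU)
    have hLd : DifferentiableAt ℝ L p := hLp.differentiableAt (by simp)
    -- differentiability of q ↦ fderiv L q (0, eᵢ)
    have hh : DifferentiableAt ℝ (fun q => fderiv ℝ L q (0, Pi.single i 1)) p := by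
      have := (hLp.fderiv_right (m := (⊤ : ℕ∞)) (by simp)).clm_apply
        (contDiffAt_const (c := ((0, Pi.single i 1) : (Fin n → ℝ) × (Fin n → ℝ))))
      exact this.differentiableAt (by simp)
    -- differentiability of q ↦ deriv φ (L q)
    have hg : DifferentiableAt ℝ (fun q => deriv φ (L q)) p :=
      ((hφ'.differentiable (by simp)) _).comp p hLd
    -- eventual equality near p
    have heq : (fun q => fderiv ℝ (φ ∘ L) q (0, Pi.single i 1))
        =ᶠ[nhds p] (fun q => deriv φ (L q) * fderiv ℝ L q (0, Pi.single i 1)) := by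
      filter_upwards [hU.mem_nhds hpU] with q hq
      exact chain q hq _
    rw [heq.fderiv_eq]
    rw [fderiv_fun_mul hg hh]
    simp only [ContinuousLinearMap.add_apply, ContinuousLinearMap.smul_apply,
      smul_eq_mul]
    -- the second-derivative term vanishes along the spray
    have hgz : fderiv ℝ (fun q => deriv φ (L q)) p (y, f x y) = 0 := by
      rw [show (fun q => deriv φ (L q)) = deriv φ ∘ L from rfl,
        fderiv_comp p ((hφ'.differentiable (by simp)) _) hLd]
      simp only [ContinuousLinearMap.comp_apply]
      rw [hSL x y hy]
      simp
    rw [hgz, chain p hy (Pi.single i 1, 0)]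
    ring
  constructor
  · intro H x y hy i
    rw [key x y hy i, H x y hy i, mul_zero]
  · intro H x y hy i
    have := H x y hy i
    rw [key x y hy i] at this
    rcases mul_eq_zero.mp this with h | h
    · exact absurd h (hφ'0 x y hy)
    · exact h
end

section
/- The canonical spray of a Lie group G is left-invariantly Riemann metrizable if and only if there exists a positive definite inner product ⟨·,·⟩ on the Lie algebra 𝔤 such that ⟨[a, α], α⟩ = 0 for all a, α ∈ 𝔤. -/
/-!
Write `u = x⁻¹v` and `η = x⁻¹w`. Along the canonical spray the left-trivialized velocity `x⁻¹v`
is stationary to first order, so for `E(x, v) = ½ B(x⁻¹v, x⁻¹v)` the only surviving terms of the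
Euler–Lagrange form come from differentiating `x⁻¹` and give `B(ηu - uη, u) = B([η, u], u)`.
This vanishes for all `x, v, w` exactly when `B([a, α], α) = 0` for all `a, α` (take `x = 1`).
-/

open ContinuousLinearMap Topology
open scoped Ring RightActions

section CanonicalSpray

variable {R : Type*} [NormedRing R] [NormedAlgebra ℝ R]

/-- The Euler–Lagrange form `ω_E(w) = S(∂E/∂y · w) - ∂E/∂x · w` of a Lagrangian `E` on `Rˣ × R`
along the canonical spray `S(x, y) = (y, y x⁻¹ y)`. -/
noncomputable def canonicalSprayEulerLagrange (E : R × R → ℝ) (x : Rˣ) (v w : R) : ℝ :=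
  fderiv ℝ (fun p => fderiv ℝ E p (0, w)) (↑x, v) (v, v * ↑x⁻¹ * v) - fderiv ℝ E (↑x, v) (w, 0)

noncomputable def leftInvariantEnergy (B : R →L[ℝ] R →L[ℝ] ℝ) (q : R × R) : ℝ :=
  1 / 2 * B (q.1⁻¹ʳ * q.2) (q.1⁻¹ʳ * q.2)

section HasSummableGeomSeries

variable [HasSummableGeomSeries R]

theorem hasFDerivAt_inverse_fst_mul {f : R × R → R} {f' : R × R →L[ℝ] R} (x : Rˣ) (v : R)
    (hf : HasFDerivAt f f' ((x : R), v)) :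
    HasFDerivAt (fun q : R × R => q.1⁻¹ʳ * f q)
      ((↑x⁻¹ : R) • f' - (mulLeftRight ℝ R ↑x⁻¹ ↑x⁻¹ ∘L fst ℝ R R) <• f (↑x, v))
      ((x : R), v) := by
  have hinv : HasFDerivAt (fun q : R × R => q.1⁻¹ʳ) (-mulLeftRight ℝ R ↑x⁻¹ ↑x⁻¹ ∘L fst ℝ R R)
      ((x : R), v) := by
    exact (hasFDerivAt_ringInverse (𝕜 := ℝ) x).comp ((x : R), v)
      (hasFDerivAt_fst (𝕜 := ℝ) (p := ((x : R), v)))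
  refine (hinv.mul' hf).congr_fderiv (ContinuousLinearMap.ext fun d => ?_)
  simp [sub_eq_add_neg]

variable {B : R →L[ℝ] R →L[ℝ] ℝ}

theorem fderiv_leftInvariantEnergy_apply (hB : ∀ a b, B a b = B b a) (x : Rˣ) (v h k : R) :
    fderiv ℝ (leftInvariantEnergy B) (↑x, v) (h, k) =
      B (↑x⁻¹ * v) (↑x⁻¹ * k - ↑x⁻¹ * h * (↑x⁻¹ * v)) := by
  have hφ := hasFDerivAt_inverse_fst_mul x v (hasFDerivAt_snd (p := ((x : R), v)))
  have hE : HasFDerivAt (leftInvariantEnergy B) _ _ :=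
    (B.hasFDerivAt_of_bilinear hφ hφ).const_mul (1 / 2)
  rw [hE.fderiv]
  simp only [one_div, Ring.inverse_invertible, invOf_units, precompR_apply, compL_apply,
    map_sub, sub_apply, smul_add, add_apply, smul_apply, comp_apply, coe_snd', smul_eq_mul,
    coe_fst', mulLeftRight_apply, mul_assoc, MulOpposite.smul_eq_mul_unop, MulOpposite.unop_op,
    precompL_apply, hB _ (↑x⁻¹ * v)]
  ring

theorem fderiv_leftInvariantEnergy_snd_eventuallyEq (hB : ∀ a b, B a b = B b a) (x : Rˣ)
    (v w : R) :
    (fun p => fderiv ℝ (leftInvariantEnergy B) p (0, w)) =ᶠ[𝓝 ((x : R), v)]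
      fun p => B (p.1⁻¹ʳ * p.2) (p.1⁻¹ʳ * w) := by
  filter_upwards [(Units.isOpen.preimage continuous_fst).mem_nhds ⟨x, rfl⟩]
    with ⟨_, _⟩ ⟨u, hu⟩
  subst hu
  simp [fderiv_leftInvariantEnergy_apply hB]

theorem canonicalSprayEulerLagrange_leftInvariantEnergy (hB : ∀ a b, B a b = B b a) (x : Rˣ)
    (v w : R) :
    canonicalSprayEulerLagrange (leftInvariantEnergy B) x v w =
      B ⁅↑x⁻¹ * w, ↑x⁻¹ * v⁆ (↑x⁻¹ * v) := by
  have hφ := hasFDerivAt_inverse_fst_mul x v (hasFDerivAt_snd (p := ((x : R), v)))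
  have hψ := hasFDerivAt_inverse_fst_mul x v (hasFDerivAt_const w ((x : R), v))
  rw [canonicalSprayEulerLagrange,
    (fderiv_leftInvariantEnergy_snd_eventuallyEq hB x v w).fderiv_eq,
    (B.hasFDerivAt_of_bilinear hφ hψ).fderiv, fderiv_leftInvariantEnergy_apply hB]
  simp only [Ring.inverse_invertible, invOf_units, precompR_apply, compL_apply, map_sub,
    sub_apply, mul_assoc, add_apply, comp_apply, smul_apply, zero_apply, smul_eq_mul, mul_zero,
    hB (↑x⁻¹ * v), map_zero, coe_fst', mulLeftRight_apply, MulOpposite.smul_eq_mul_unop,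
    MulOpposite.unop_op, zero_sub, precompL_apply, coe_snd', sub_self, add_zero, map_neg, neg_apply,
    sub_neg_eq_add, Ring.lie_def]
  ring

end HasSummableGeomSeries

theorem canonicalSprayEulerLagrange_bilinForm [FiniteDimensional ℝ R]
    {B : LinearMap.BilinForm ℝ R}
    (hB : ∀ a b, B a b = B b a) (x : Rˣ) (v w : R) :
    canonicalSprayEulerLagrange (fun q => 1 / 2 * B (q.1⁻¹ʳ * q.2) (q.1⁻¹ʳ * q.2)) x v w =
      B ⁅↑x⁻¹ * w, ↑x⁻¹ * v⁆ (↑x⁻¹ * v) := by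
  have : CompleteSpace R := FiniteDimensional.complete ℝ R
  exact canonicalSprayEulerLagrange_leftInvariantEnergy
    (B := LinearMap.toContinuousLinearMap (LinearMap.toContinuousLinearMap.toLinearMap ∘ₗ B))
    hB x v w

end CanonicalSpray

attribute [local instance] Matrix.linftyOpNormedAddCommGroup Matrix.linftyOpNormedSpace
  Matrix.linftyOpNormedRing Matrix.linftyOpNormedAlgebra

/-- The canonical spray of a (matrix) Lie group `G` is left-invariantly Riemann
metrizable if and only if there exists a positive definite inner product
`⟨·,·⟩` on the Lie algebra `𝔤` such that `⟨[a, α], α⟩ = 0` for all `a, α ∈ 𝔤`.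
Left-invariant Riemannian metrics on `G` correspond to inner products `B` on
`𝔤`; metrizability means the associated left-invariant energy Lagrangian
`E(x, v) = ½ B(x⁻¹v, x⁻¹v)` satisfies the Euler-Lagrange equation associated to
the canonical spray `S_(x,y) = (y, y x⁻¹ y)` (the Euler-Lagrange form being
semi-basic with components `ω_E(w) = S(∂E/∂y in direction w) - ∂E/∂x in
direction w`).  Here `𝔤 = 𝔤𝔩(n, ℝ)` with `[a, α] = aα - αa`. -/
theorem leftInvariant_metrizable_iff_inner_bracket {n : ℕ} :
    -- left-invariant Riemann metrizability of the canonical spray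
    (∃ B : LinearMap.BilinForm ℝ (Matrix (Fin n) (Fin n) ℝ),
      (∀ a b, B a b = B b a) ∧ (∀ a, a ≠ 0 → 0 < B a a) ∧
      (∀ x : (Matrix (Fin n) (Fin n) ℝ)ˣ, ∀ v w : Matrix (Fin n) (Fin n) ℝ,
        fderiv ℝ
            (fun p : Matrix (Fin n) (Fin n) ℝ × Matrix (Fin n) (Fin n) ℝ =>
              fderiv ℝ
                (fun q : Matrix (Fin n) (Fin n) ℝ × Matrix (Fin n) (Fin n) ℝ =>
                  (1/2 : ℝ) * B (q.1⁻¹ * q.2) (q.1⁻¹ * q.2)) p (0, w))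
            ((x : Matrix (Fin n) (Fin n) ℝ), v)
            (v, v * (↑x⁻¹ : Matrix (Fin n) (Fin n) ℝ) * v)
          - fderiv ℝ
            (fun q : Matrix (Fin n) (Fin n) ℝ × Matrix (Fin n) (Fin n) ℝ =>
              (1/2 : ℝ) * B (q.1⁻¹ * q.2) (q.1⁻¹ * q.2))
            ((x : Matrix (Fin n) (Fin n) ℝ), v) (w, 0) = 0)) ↔
    -- existence of an inner product on `𝔤` with `⟨[a,α],α⟩ = 0`
    (∃ B : LinearMap.BilinForm ℝ (Matrix (Fin n) (Fin n) ℝ),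
      (∀ a b, B a b = B b a) ∧ (∀ a, a ≠ 0 → 0 < B a a) ∧
      (∀ a α : Matrix (Fin n) (Fin n) ℝ, B (a * α - α * a) α = 0)) := by
  simp only [Matrix.nonsing_inv_eq_ringInverse]
  refine exists_congr fun B => and_congr_right fun hB => and_congr_right fun _ => ?_
  have hEL := canonicalSprayEulerLagrange_bilinForm (R := Matrix (Fin n) (Fin n) ℝ) hB
  constructor
  · intro h a α
    simpa [Ring.lie_def] using (hEL 1 α a).symm.trans (h 1 α a)
  · intro h x v w
    exact (hEL x v w).trans (h _ _)
end

section
/- The 3-dimensional Heisenberg Lie algebra 𝔥₃ (with basis e₁, e₂, e₃ and only nonzero bracket [e₁, e₂] = e₃) admits no inner product ⟨·,·⟩ satisfying ⟨[a, α], α⟩ = 0 for all a, α ∈ 𝔥₃. Consequently, the canonical spray of the Heisenberg group is not metrizable by a left-invariant Riemannian metric. -/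
/-!
If `[x, y] = z` and `[x, z] = 0`, then testing `⟨[x, α], α⟩ = 0` at `α = y` gives `⟨z, y⟩ = 0`,
and at `α = y + z` it gives `⟨z, y + z⟩ = 0`; hence `⟨z, z⟩ = 0`. For `𝔥₃` take
`(x, y, z) = (e₁, e₂, e₃)`: the centre direction `e₃` would be null, which positivity forbids.
-/

namespace Matrix

variable {n R : Type*} [Fintype n] [DecidableEq n] [Ring R]

theorem lie_single_single_of_ne {i j k : n} (hki : k ≠ i) (a b : R) :
    ⁅single i j a, single j k b⁆ = single i k (a * b) := by
  rw [Ring.lie_def, single_mul_single_same, single_mul_single_of_ne (h := hki), sub_zero]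

theorem lie_single_single_same_row {i j k : n} (hji : j ≠ i) (hki : k ≠ i) (a b : R) :
    ⁅single i j a, single i k b⁆ = 0 := by
  rw [Ring.lie_def, single_mul_single_of_ne (h := hji), single_mul_single_of_ne (h := hki),
    sub_zero]

end Matrix

theorem LinearMap.BilinForm.apply_self_eq_zero_of_lie_eq_of_lie_eq_zero
    {R A : Type*} [CommSemiring R] [Ring A] [Module R A]
    (B : LinearMap.BilinForm R A) (S : Submodule R A) {x y z : A}
    (hB : ∀ α ∈ S, B ⁅x, α⁆ α = 0) (hy : y ∈ S) (hz : z ∈ S)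
    (hxy : ⁅x, y⁆ = z) (hxz : ⁅x, z⁆ = 0) : B z z = 0 := by
  have hzy : B z y = 0 := hxy ▸ hB y hy
  have hlie_add : ⁅x, y + z⁆ = z := by
    rw [Ring.lie_def, mul_add, add_mul, add_sub_add_comm, ← Ring.lie_def, ← Ring.lie_def, hxy,
      hxz, add_zero]
  have hzyz : B z (y + z) = 0 := by simpa only [hlie_add] using hB (y + z) (S.add_mem hy hz)
  rwa [map_add, hzy, zero_add] at hzyz

/-- The 3-dimensional Heisenberg Lie algebra `𝔥₃` — realized as the span of
`e₁ = E₀₁`, `e₂ = E₁₂`, `e₃ = E₀₂` inside `𝔤𝔩(3, ℝ)`, with only nonzero bracket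
`[e₁, e₂] = e₃` — admits no inner product `⟨·,·⟩` satisfying `⟨[a, α], α⟩ = 0`
for all `a, α ∈ 𝔥₃`.  Consequently the canonical spray of the Heisenberg group
is not metrizable by a left-invariant Riemannian metric. -/
theorem heisenberg_no_invariant_inner_product :
    ¬ ∃ B : LinearMap.BilinForm ℝ (Matrix (Fin 3) (Fin 3) ℝ),
      (∀ x ∈ Submodule.span ℝ
          {Matrix.single (0 : Fin 3) (1 : Fin 3) (1 : ℝ),
           Matrix.single (1 : Fin 3) (2 : Fin 3) (1 : ℝ),
           Matrix.single (0 : Fin 3) (2 : Fin 3) (1 : ℝ)},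
        ∀ y ∈ Submodule.span ℝ
          {Matrix.single (0 : Fin 3) (1 : Fin 3) (1 : ℝ),
           Matrix.single (1 : Fin 3) (2 : Fin 3) (1 : ℝ),
           Matrix.single (0 : Fin 3) (2 : Fin 3) (1 : ℝ)},
        B x y = B y x) ∧
      (∀ x ∈ Submodule.span ℝ
          {Matrix.single (0 : Fin 3) (1 : Fin 3) (1 : ℝ),
           Matrix.single (1 : Fin 3) (2 : Fin 3) (1 : ℝ),
           Matrix.single (0 : Fin 3) (2 : Fin 3) (1 : ℝ)},
        x ≠ 0 → 0 < B x x) ∧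
      (∀ a ∈ Submodule.span ℝ
          {Matrix.single (0 : Fin 3) (1 : Fin 3) (1 : ℝ),
           Matrix.single (1 : Fin 3) (2 : Fin 3) (1 : ℝ),
           Matrix.single (0 : Fin 3) (2 : Fin 3) (1 : ℝ)},
        ∀ α ∈ Submodule.span ℝ
          {Matrix.single (0 : Fin 3) (1 : Fin 3) (1 : ℝ),
           Matrix.single (1 : Fin 3) (2 : Fin 3) (1 : ℝ),
           Matrix.single (0 : Fin 3) (2 : Fin 3) (1 : ℝ)},
        B ⁅a, α⁆ α = 0) := by
  rintro ⟨B, -, hpos, hinv⟩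
  set e₁ := Matrix.single (0 : Fin 3) (1 : Fin 3) (1 : ℝ)
  set e₂ := Matrix.single (1 : Fin 3) (2 : Fin 3) (1 : ℝ)
  set e₃ := Matrix.single (0 : Fin 3) (2 : Fin 3) (1 : ℝ)
  have he₁ : e₁ ∈ Submodule.span ℝ {e₁, e₂, e₃} := Submodule.subset_span (by simp)
  have he₂ : e₂ ∈ Submodule.span ℝ {e₁, e₂, e₃} := Submodule.subset_span (by simp)
  have he₃ : e₃ ∈ Submodule.span ℝ {e₁, e₂, e₃} := Submodule.subset_span (by simp)
  have he₁₂ : ⁅e₁, e₂⁆ = e₃ := by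
    rw [Matrix.lie_single_single_of_ne (by decide), one_mul]
  have he₁₃ : ⁅e₁, e₃⁆ = 0 := Matrix.lie_single_single_same_row (by decide) (by decide) _ _
  have he₃_ne : e₃ ≠ 0 := fun h => by simpa [e₃] using congrFun (congrFun h 0) 2
  have he₃_null : B e₃ e₃ = 0 :=
    B.apply_self_eq_zero_of_lie_eq_of_lie_eq_zero _ (hinv _ he₁) he₂ he₃ he₁₂ he₁₃
  exact (hpos _ he₃ he₃_ne).ne' he₃_null
end

section
/- The map σ_κ : ℝ² → 𝔞𝔰𝔬(2), σ_κ(v₁,v₂) = [[0, −κ|v|, v₁],[κ|v|, 0, v₂],[0,0,0]] with |v| = √(v₁²+v₂²), is positively 1-homogeneous (σ_κ(λv) = λσ_κ(v) for λ > 0), satisfies π_* ∘ σ_κ = id (its translational part is v), and is Ad(SO(2))-equivariant: σ_κ(R v) = Ad_R σ_κ(v) for every rotation R ∈ SO(2) (embedded in ASO(2)). -/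
open scoped Matrix

/-- The homogeneous lift `σ_κ : ℝ² → 𝔞𝔰𝔬(2)`,
`σ_κ(v₁,v₂) = [[0, −κ|v|, v₁], [κ|v|, 0, v₂], [0,0,0]]` with `|v| = √(v₁²+v₂²)`. -/
noncomputable def sigmaKappa (κ : ℝ) (v : Fin 2 → ℝ) : Matrix (Fin 3) (Fin 3) ℝ :=
  !![0, -κ * Real.sqrt ((v 0) ^ 2 + (v 1) ^ 2), v 0;
     κ * Real.sqrt ((v 0) ^ 2 + (v 1) ^ 2), 0, v 1;
     0, 0, 0]

/-- A rotation `R ∈ SO(2)` acting on the plane. -/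
noncomputable def rot2 (θ : ℝ) (v : Fin 2 → ℝ) : Fin 2 → ℝ :=
  ![Real.cos θ * v 0 - Real.sin θ * v 1, Real.sin θ * v 0 + Real.cos θ * v 1]

/-- The embedding of the rotation `R ∈ SO(2)` into `ASO(2)` as a `3 × 3` matrix. -/
noncomputable def rot3 (θ : ℝ) : Matrix (Fin 3) (Fin 3) ℝ :=
  !![Real.cos θ, -Real.sin θ, 0;
     Real.sin θ, Real.cos θ, 0;
     0, 0, 1]

lemma rot2_norm (θ : ℝ) (v : Fin 2 → ℝ) :
    (rot2 θ v 0) ^ 2 + (rot2 θ v 1) ^ 2 = (v 0) ^ 2 + (v 1) ^ 2 := by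
  simp only [rot2, Matrix.cons_val_zero, Matrix.cons_val_one, Matrix.head_cons]
  have h := Real.sin_sq_add_cos_sq θ
  nlinarith [h]

/-- The map `σ_κ` is a homogeneous lift: it is positively 1-homogeneous, its
translational part is `v` (so `π_* ∘ σ_κ = id`), and it is `Ad(SO(2))`-equivariant:
`σ_κ(R v) = Ad_R σ_κ(v) = R σ_κ(v) R⁻¹` for every rotation `R ∈ SO(2)`. -/
theorem sigmaKappa_is_homogeneous_lift (κ : ℝ) :
    (∀ (v : Fin 2 → ℝ) (l : ℝ), 0 < l → sigmaKappa κ (l • v) = l • sigmaKappa κ v) ∧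
    (∀ v : Fin 2 → ℝ, sigmaKappa κ v 0 2 = v 0 ∧ sigmaKappa κ v 1 2 = v 1) ∧
    (∀ (θ : ℝ) (v : Fin 2 → ℝ),
      sigmaKappa κ (rot2 θ v) = rot3 θ * sigmaKappa κ v * rot3 (-θ)) := by
  refine ⟨?_, ?_, ?_⟩
  · intro v l hl
    have hs : Real.sqrt ((l * v 0) ^ 2 + (l * v 1) ^ 2)
        = l * Real.sqrt ((v 0) ^ 2 + (v 1) ^ 2) := by
      rw [show (l * v 0) ^ 2 + (l * v 1) ^ 2 = l ^ 2 * ((v 0) ^ 2 + (v 1) ^ 2) by ring,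
        Real.sqrt_mul (by positivity), Real.sqrt_sq hl.le]
    simp only [sigmaKappa, Pi.smul_apply, smul_eq_mul, hs]
    ext i j
    fin_cases i <;> fin_cases j <;>
      simp [Matrix.vecHead, Matrix.vecTail] <;> ring
  · intro v
    constructor <;> simp [sigmaKappa]
  · intro θ v
    have hc := Real.sin_sq_add_cos_sq θ
    have hs : Real.sqrt ((rot2 θ v 0) ^ 2 + (rot2 θ v 1) ^ 2)
        = Real.sqrt ((v 0) ^ 2 + (v 1) ^ 2) := by rw [rot2_norm]
    have key : ∀ i j : Fin 3, sigmaKappa κ (rot2 θ v) i j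
        = (rot3 θ * sigmaKappa κ v * rot3 (-θ)) i j := by
      intro i j
      simp only [sigmaKappa, rot3, Matrix.mul_apply,
        Real.cos_neg, Real.sin_neg, Fin.sum_univ_three, hs]
      fin_cases i <;> fin_cases j <;>
        simp [rot2, Matrix.vecHead, Matrix.vecTail] <;>
        first
          | linear_combination (κ * Real.sqrt (v 0 ^ 2 + v 1 ^ 2)) * hc
          | linear_combination (-(κ * Real.sqrt (v 0 ^ 2 + v 1 ^ 2))) * hc
          | nlinarith [hc, Real.sq_sqrt (by positivity : (0:ℝ) ≤ v 0 ^ 2 + v 1 ^ 2)]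
    ext i j
    exact key i j
end
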